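/- arXiv:2105.01336 — 6 statements merged into one kernel-verified Lean document; each statement's English description precedes it below -/
import Mathlib

section
/- Fix μ > 0, v₊ > 1, u₋ > u₊, set s = (u₋ − u₊)/(v₊ − 1), let v̄, ū be the limit traveling-wave profiles and define p̄ : ℝ → ℝ by p̄(ξ) = s²(v₊ − 1) for ξ ≤ 0 and p̄(ξ) = 0 for ξ > 0. Then the functions v(t,x) = v̄(x − s t), u(t,x) = ū(x − s t), p(t,x) = p̄(x − s t) satisfy, for every (t,x) with x ≠ s t: ∂ₜv − ∂ₓu = 0 and ∂ₜu + ∂ₓp − μ ∂ₓ((1/v) ∂ₓu) = 0; moreover the unilateral constraint v ≥ 1, (v − 1) p = 0, p ≥ 0 holds at every (t,x). -/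
/-!
Off the interface `ξ = x - s t = 0` the ansatz turns both equations into ODEs for the profiles.
Since `ū = const - s v̄`, the mass equation holds identically, and the momentum equation reduces
to the local constancy of the integrated flux `μ v̄' / v̄ + s v̄`: on `ξ < 0` the profile is `1`,
and on `ξ > 0` it is a logistic curve solving `v̄' = (s / μ) v̄ (v₊ - v̄)`, for which the flux
is `s v₊`. The constraint is immediate, because the logistic profile starts at `1` and increases
to `v₊`, while `p̄` vanishes where `v̄ > 1`.
-/

open Filter Topology Real

theorem deriv_comp_const_sub_mul {𝕜 F : Type*} [NontriviallyNormedField 𝕜] [NormedAddCommGroup F]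
    [NormedSpace 𝕜 F] (f : 𝕜 → F) (x s t : 𝕜) :
    deriv (fun τ => f (x - s * τ)) t = -(s • deriv f (x - s * t)) := by
  rw [deriv_comp_mul_left s (fun y => f (x - y)) t, deriv_comp_const_sub, smul_neg]

section Piecewise

variable {α : Type*} {v f g : ℝ → α} {ξ : ℝ}

theorem eventuallyEq_left_of_piecewise (hv : ∀ x, v x = if x ≤ 0 then f x else g x)
    (hξ : ξ < 0) : v =ᶠ[𝓝 ξ] f :=
  (eventually_lt_nhds hξ).mono fun x hx => (hv x).trans (if_pos hx.le)

theorem eventuallyEq_right_of_piecewise (hv : ∀ x, v x = if x ≤ 0 then f x else g x)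
    (hξ : 0 < ξ) : v =ᶠ[𝓝 ξ] g :=
  (eventually_gt_nhds hξ).mono fun x hx => (hv x).trans (if_neg (not_le.2 hx))

theorem deriv_eq_zero_of_piecewise_const {p : ℝ → ℝ} {a b : ℝ}
    (hp : ∀ x, p x = if x ≤ 0 then a else b) (hξ : ξ ≠ 0) : deriv p ξ = 0 := by
  rcases hξ.lt_or_gt with hξ | hξ
  · rw [(eventuallyEq_left_of_piecewise hp hξ).deriv_eq, deriv_const]
  · rw [(eventuallyEq_right_of_piecewise hp hξ).deriv_eq, deriv_const]

end Piecewise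

section Logistic

/-- The logistic curve with carrying capacity `a`, solving `f' = k f (a - f)`. -/
noncomputable def logistic (a c k x : ℝ) : ℝ := a / (1 + c * exp (-(k * a) * x))

variable {a c k : ℝ}

theorem logistic_denom_pos (hc : 0 ≤ c) (x : ℝ) : 0 < 1 + c * exp (-(k * a) * x) := by
  positivity

theorem hasDerivAt_logistic (hc : 0 ≤ c) (x : ℝ) :
    HasDerivAt (logistic a c k) (k * logistic a c k x * (a - logistic a c k x)) x := by
  have hD := (logistic_denom_pos (k := k) (a := a) hc x).ne'
  have h := (((hasDerivAt_id' x).const_mul (-(k * a))).exp.const_mul c).const_add 1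
  refine ((hasDerivAt_const x a).div h hD).congr_deriv ?_
  simp only [logistic]
  field_simp
  ring

theorem logistic_pos (ha : 0 < a) (hc : 0 ≤ c) (x : ℝ) : 0 < logistic a c k x :=
  div_pos ha (logistic_denom_pos hc x)

theorem one_le_logistic (ha : 1 ≤ a) (hkx : 0 ≤ k * x) : 1 ≤ logistic a (a - 1) k x := by
  have hexp : exp (-(k * a) * x) ≤ 1 :=
    exp_le_one_iff.2 (by nlinarith)
  rw [logistic, one_le_div (logistic_denom_pos (by linarith) x)]
  nlinarith

theorem logistic_integratedFlux {μ s : ℝ} (hμ : μ ≠ 0) (ha : 0 < a) (hc : 0 ≤ c) (x : ℝ) :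
    μ * deriv (logistic a c (s / μ)) x / logistic a c (s / μ) x
      + s * logistic a c (s / μ) x = s * a := by
  have hL := (logistic_pos (k := s / μ) ha hc x).ne'
  rw [(hasDerivAt_logistic hc x).deriv]
  field_simp
  ring

end Logistic

section Profiles

variable {μ s c C ξ : ℝ} {v u p : ℝ → ℝ}

theorem eventually_integratedFlux_eq_of_eventuallyEq {g : ℝ → ℝ} (h : v =ᶠ[𝓝 ξ] g)
    (hg : ∀ y, μ * deriv g y / g y + s * g y = C) :
    ∀ᶠ y in 𝓝 ξ, μ * deriv v y / v y + s * v y = C := by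
  filter_upwards [h, h.deriv] with y hv hdv
  rw [hv, hdv]
  exact hg y

theorem deriv_eq_neg_mul_deriv (hu : ∀ y, u y = c - s * v y) (y : ℝ) :
    deriv u y = -(s * deriv v y) := by
  rw [show u = fun y => c - s * v y from funext hu, deriv_const_sub, deriv_const_mul_field']

theorem mass_residual_eq_zero (hu : ∀ y, u y = c - s * v y) (ξ : ℝ) :
    -(s * deriv v ξ) - deriv u ξ = 0 := by
  rw [deriv_eq_neg_mul_deriv hu, sub_neg_eq_add, neg_add_cancel]

theorem momentum_residual_eq_zero (hμ : μ ≠ 0) (hu : ∀ y, u y = c - s * v y)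
    (hp : deriv p ξ = 0) (hflux : ∀ᶠ y in 𝓝 ξ, μ * deriv v y / v y + s * v y = C) :
    -(s * deriv u ξ) + deriv p ξ - μ * deriv (fun y => 1 / v y * deriv u y) ξ = 0 := by
  have hstress : (fun y => 1 / v y * deriv u y) =ᶠ[𝓝 ξ] fun y => s / μ * (s * v y - C) := by
    filter_upwards [hflux] with y hy
    rw [deriv_eq_neg_mul_deriv hu, ← hy]
    field_simp
    ring
  rw [hstress.deriv_eq]
  simp only [deriv_const_mul_field', deriv_sub_const]
  rw [deriv_eq_neg_mul_deriv hu, hp]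
  field_simp
  ring

theorem exists_eventually_integratedFlux_eq (hμ : μ ≠ 0) {a : ℝ} (ha : 1 ≤ a)
    (hv : ∀ x, v x = if x ≤ 0 then 1 else logistic a (a - 1) (s / μ) x) (hξ : ξ ≠ 0) :
    ∃ C, ∀ᶠ y in 𝓝 ξ, μ * deriv v y / v y + s * v y = C := by
  rcases hξ.lt_or_gt with hξ | hξ
  · refine ⟨s, eventually_integratedFlux_eq_of_eventuallyEq
      (eventuallyEq_left_of_piecewise hv hξ) fun y => ?_⟩
    simp
  · exact ⟨s * a, eventually_integratedFlux_eq_of_eventuallyEq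
      (eventuallyEq_right_of_piecewise hv hξ)
      (logistic_integratedFlux hμ (by linarith) (by linarith))⟩

theorem unilateral_constraint {a k P : ℝ} (ha : 1 ≤ a) (hk : 0 ≤ k) (hP : 0 ≤ P)
    (hv : ∀ x, v x = if x ≤ 0 then 1 else logistic a (a - 1) k x)
    (hp : ∀ x, p x = if x ≤ 0 then P else 0) (ξ : ℝ) :
    1 ≤ v ξ ∧ (v ξ - 1) * p ξ = 0 ∧ 0 ≤ p ξ := by
  rw [hv, hp]
  split_ifs with hξ
  · simpa using hP
  · simpa using one_le_logistic ha (mul_nonneg hk (not_le.1 hξ).le)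

end Profiles

/-- The traveling wave `(v,u,p)(t,x) = (v̄,ū,p̄)(x − st)` solves the free–congested
Navier–Stokes system away from the interface `x = st`, and satisfies the unilateral
constraint everywhere. -/
theorem stmt3 (μ vp um up : ℝ) (hμ : 0 < μ) (hvp : 1 < vp) (hu : up < um)
    (s : ℝ) (hs : s = (um - up) / (vp - 1))
    (vbar : ℝ → ℝ)
    (hvbar : ∀ x : ℝ,
      vbar x = if x ≤ 0 then 1 else vp / (1 + (vp - 1) * Real.exp (-s * vp * x / μ)))
    (ubar : ℝ → ℝ)
    (hubar : ∀ x : ℝ, ubar x = up + s * vp - s * vbar x)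
    (pbar : ℝ → ℝ)
    (hpbar : ∀ x : ℝ, pbar x = if x ≤ 0 then s ^ 2 * (vp - 1) else 0) :
    (∀ t x : ℝ, x ≠ s * t →
      -- mass equation : ∂ₜ v − ∂ₓ u = 0
      deriv (fun τ => vbar (x - s * τ)) t - deriv (fun y => ubar (y - s * t)) x = 0 ∧
      -- momentum equation : ∂ₜ u + ∂ₓ p − μ ∂ₓ((1/v) ∂ₓ u) = 0
      deriv (fun τ => ubar (x - s * τ)) t + deriv (fun y => pbar (y - s * t)) x
        - μ * deriv (fun y => (1 / vbar (y - s * t)) * deriv (fun z => ubar (z - s * t)) y) x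
        = 0) ∧
    (∀ t x : ℝ,
      1 ≤ vbar (x - s * t) ∧
      (vbar (x - s * t) - 1) * pbar (x - s * t) = 0 ∧
      0 ≤ pbar (x - s * t)) := by
  have hs0 : 0 < s := hs ▸ div_pos (sub_pos.2 hu) (sub_pos.2 hvp)
  have hv : ∀ x, vbar x = if x ≤ 0 then 1 else logistic vp (vp - 1) (s / μ) x := fun x => by
    rw [hvbar, logistic]
    ring_nf
  refine ⟨fun t x hx => ?_, fun t x => unilateral_constraint hvp.le (by positivity)
    (by positivity) hv hpbar (x - s * t)⟩
  have hξ : x - s * t ≠ 0 := sub_ne_zero.2 hx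
  obtain ⟨C, hflux⟩ := exists_eventually_integratedFlux_eq hμ.ne' hvp.le hv hξ
  simp only [deriv_comp_const_sub_mul, deriv_comp_sub_const, smul_eq_mul]
  rw [deriv_comp_sub_const (f := fun ξ => 1 / vbar ξ * deriv ubar ξ)]
  exact ⟨mass_residual_eq_zero hubar _, momentum_residual_eq_zero hμ.ne' hubar
    (deriv_eq_zero_of_piecewise_const hpbar hξ) hflux⟩
end

section
/- Fix μ > 0, v₊ > 1, u₋ > u₊, set s = (u₋ − u₊)/(v₊ − 1), and let v̄, ū be the limit traveling-wave profiles. Then the viscous flux is continuous across the interface: lim_{x→0⁺} (−μ ū'(x)/v̄(x)) = s²(v₊ − 1), i.e. the pressure value p₋ = s²(v₊ − 1) in the congested zone x < 0 matches the limit of −μ ū'/v̄ from the free zone. -/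
/-!
Since `ū = const − s v̄`, on `x > 0` the flux is `−μ ū'/v̄ = μ s v̄'/v̄ = μ s (log v̄)'`, and `v̄` is
there a logistic curve whose logarithmic derivative `(v₊ − 1) k e^{−kx} / (1 + (v₊ − 1) e^{−kx})`,
`k = s v₊/μ`, is continuous on all of `ℝ`. Its value at `0` is `(v₊ − 1) k / v₊`, so the limit is
`μ s (v₊ − 1) k / v₊ = s² (v₊ − 1)`.
-/

open Real Set Filter Topology

/-- On `x > 0`, `v̄ = logisticProfile v₊ (v₊ − 1) (s v₊ / μ)`. -/
noncomputable def logisticProfile (a c k x : ℝ) : ℝ := a / (1 + c * exp (-k * x))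

theorem hasDerivAt_logisticProfile {a c k x : ℝ} (hx : 1 + c * exp (-k * x) ≠ 0) :
    HasDerivAt (logisticProfile a c k)
      (a * (c * k * exp (-k * x)) / (1 + c * exp (-k * x)) ^ 2) x := by
  have hexp : HasDerivAt (fun y => exp (-k * y)) (exp (-k * x) * -k) x := by
    simpa using ((hasDerivAt_id x).const_mul (-k)).exp
  exact ((hasDerivAt_const x a).div ((hexp.const_mul c).const_add 1) hx).congr_deriv (by ring)

theorem deriv_div_logisticProfile {a c k x : ℝ} (ha : a ≠ 0) (hx : 1 + c * exp (-k * x) ≠ 0) :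
    deriv (logisticProfile a c k) x / logisticProfile a c k x =
      c * k * exp (-k * x) / (1 + c * exp (-k * x)) := by
  rw [(hasDerivAt_logisticProfile hx).deriv, logisticProfile]
  field_simp

theorem tendsto_logDeriv_logisticProfile_zero {c k : ℝ} (hc : 1 + c ≠ 0) :
    Tendsto (fun x => c * k * exp (-k * x) / (1 + c * exp (-k * x))) (𝓝 0)
      (𝓝 (c * k / (1 + c))) := by
  have hcont : ContinuousAt (fun x => c * k * exp (-k * x) / (1 + c * exp (-k * x))) 0 :=
    ContinuousAt.div (by fun_prop) (by fun_prop) (by simpa using hc)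
  simpa using hcont.tendsto

theorem stmt4_general (μ vp up : ℝ) (hμ : 0 < μ) (hvp : 1 < vp)
    (s : ℝ)
    (vbar : ℝ → ℝ)
    (hvbar : ∀ x : ℝ,
      vbar x = if x ≤ 0 then 1 else vp / (1 + (vp - 1) * Real.exp (-s * vp * x / μ)))
    (ubar : ℝ → ℝ)
    (hubar : ∀ x : ℝ, ubar x = up + s * vp - s * vbar x) :
    Tendsto (fun x => -μ * deriv ubar x / vbar x) (nhdsWithin 0 (Ioi 0))
      (nhds (s ^ 2 * (vp - 1))) := by
  set k := s * vp / μ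
  set w := logisticProfile vp (vp - 1) k
  have hD : ∀ x, 1 + (vp - 1) * exp (-k * x) ≠ 0 := fun x => by
    have := exp_pos (-k * x); nlinarith
  have hvbar_eq : ∀ x > 0, vbar x = w x := fun x hx => by
    rw [hvbar, if_neg (not_le.mpr hx), show -s * vp * x / μ = -k * x by ring]
    rfl
  have hflux : ∀ x > 0, -μ * deriv ubar x / vbar x = μ * s * (deriv w x / w x) := by
    intro x hx
    have hw : HasDerivAt w (deriv w x) x :=
      (hasDerivAt_logisticProfile (hD x)).differentiableAt.hasDerivAt
    have hv : HasDerivAt vbar (deriv w x) x := hw.congr_of_eventuallyEq <| by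
      filter_upwards [Ioi_mem_nhds hx] with y hy using hvbar_eq y hy
    have hu : HasDerivAt ubar (-(s * deriv w x)) x := by
      rw [funext hubar]; exact (hv.const_mul s).const_sub _
    rw [hu.deriv, hvbar_eq x hx]
    ring
  have hvp0 : vp ≠ 0 := (zero_lt_one.trans hvp).ne'
  have hlim : μ * s * ((vp - 1) * k / (1 + (vp - 1))) = s ^ 2 * (vp - 1) := by
    simp only [k, add_sub_cancel]; field_simp
  rw [← hlim]
  refine ((tendsto_logDeriv_logisticProfile_zero (by linarith)).const_mul (μ * s)
    |>.mono_left nhdsWithin_le_nhds).congr' ?_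
  filter_upwards [self_mem_nhdsWithin] with x hx
  rw [hflux x hx, deriv_div_logisticProfile hvp0 (hD x)]

/-- Continuity of the viscous flux across the interface: the limit from the free zone of
`−μ ū'/v̄` as `x → 0⁺` equals the congested pressure value `s²(v₊ − 1)`. -/
theorem stmt4 (μ vp um up : ℝ) (hμ : 0 < μ) (hvp : 1 < vp) (hu : up < um)
    (s : ℝ) (hs : s = (um - up) / (vp - 1))
    (vbar : ℝ → ℝ)
    (hvbar : ∀ x : ℝ,
      vbar x = if x ≤ 0 then 1 else vp / (1 + (vp - 1) * Real.exp (-s * vp * x / μ)))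
    (ubar : ℝ → ℝ)
    (hubar : ∀ x : ℝ, ubar x = up + s * vp - s * vbar x) :
    Tendsto (fun x => -μ * deriv ubar x / vbar x) (nhdsWithin 0 (Ioi 0))
      (nhds (s ^ 2 * (vp - 1))) :=
  stmt4_general μ vp up hμ hvp s vbar hvbar ubar hubar
end

section
/- Let γ ≥ 1, μ > 0, v₊ > 1 and 0 < ε < 1 with 1 + ε^{1/(γ+1)} < v₊. Let p_ε(v) = ε(v−1)^{−γ}, v₋^ε := 1 + ε^{1/γ}, s_ε := sqrt((p_ε(v₋^ε) − p_ε(v₊))/(v₊ − v₋^ε)), and Φ_ε(v) := s_ε²(v₊ − v) + p_ε(v₊) − p_ε(v). Then there exists a differentiable function v̄_ε : ℝ → ℝ such that: v̄_ε(0) = 1 + ε^{1/(γ+1)}; v₋^ε < v̄_ε(x) < v₊ for all x ∈ ℝ; v̄_ε'(x) = (v̄_ε(x)/(μ s_ε)) Φ_ε(v̄_ε(x)) for all x ∈ ℝ; v̄_ε is strictly increasing; v̄_ε(x) → v₋^ε as x → −∞ and v̄_ε(x) → v₊ as x → +∞. -/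
/-!
The profile is found by separating variables in `v' = F(v)`, `F(v) = v / (μ s) · Φ(v)`.
Since `p_ε` is strictly convex, `Φ` (the height of the chord of `p_ε` over `[v₋, v₊]` above its
graph) is positive on `(v₋, v₊)`, and the tangent lines of `p_ε` at the endpoints show that it
vanishes at most linearly there. Hence the time map `G(v) = ∫_c^v dt / F(t)` diverges
logarithmically at both ends and is an increasing `C¹` bijection `(v₋, v₊) → ℝ`, with
`c = 1 + ε^{1/(γ+1)}`; its inverse is the profile.
-/

open Set Filter Topology

theorem tendsto_nhdsLT_atTop_of_inv_le_deriv {G G' : ℝ → ℝ} {b c K : ℝ} (hK : 0 < K)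
    (hcb : c < b) (hG : ∀ v ∈ Ico c b, HasDerivAt G (G' v) v)
    (hG' : ∀ v ∈ Ico c b, (K * (b - v))⁻¹ ≤ G' v) :
    Tendsto G (𝓝[<] b) atTop := by
  set H : ℝ → ℝ := fun v => G v + K⁻¹ * Real.log (b - v)
  have hH : ∀ v ∈ Ico c b, HasDerivAt H (G' v - (K * (b - v))⁻¹) v := fun v hv => by
    have hlog := ((hasDerivAt_id v).const_sub b).log (sub_ne_zero.2 hv.2.ne')
    exact ((hG v hv).add (hlog.const_mul K⁻¹)).congr_deriv (by simp only [id, mul_inv]; ring)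
  have hHmono : MonotoneOn H (Ico c b) := by
    refine monotoneOn_of_hasDerivWithinAt_nonneg (f' := fun v => G' v - (K * (b - v))⁻¹)
      (convex_Ico c b) (fun v hv => (hH v hv).continuousAt.continuousWithinAt)
      (fun v hv => ?_) (fun v hv => ?_)
    · exact (hH v (interior_subset hv)).hasDerivWithinAt
    · exact sub_nonneg.2 (hG' v (interior_subset hv))
  have hdist : Tendsto (fun v => b - v) (𝓝[<] b) (𝓝[>] 0) := by
    refine tendsto_nhdsWithin_of_tendsto_nhds_of_eventually_within _ ?_ ?_
    · exact tendsto_nhdsWithin_of_tendsto_nhds (by simpa using (continuous_sub_left b).tendsto b)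
    · filter_upwards [self_mem_nhdsWithin] with v hv using sub_pos.2 (mem_Iio.1 hv)
  have hlog : Tendsto (fun v => H c - K⁻¹ * Real.log (b - v)) (𝓝[<] b) atTop :=
    tendsto_atTop_add_const_left _ _ <| tendsto_neg_atBot_atTop.comp <|
      (Real.tendsto_log_nhdsGT_zero.comp hdist).const_mul_atBot (inv_pos.2 hK)
  refine tendsto_atTop_mono' _ ?_ hlog
  filter_upwards [Ioo_mem_nhdsLT hcb] with v hv
  have := hHmono ⟨le_rfl, hcb⟩ ⟨hv.1.le, hv.2⟩ hv.1.le
  simp only [H] at this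
  linarith

theorem tendsto_nhdsGT_atBot_of_inv_le_deriv {G G' : ℝ → ℝ} {a c K : ℝ} (hK : 0 < K)
    (hac : a < c) (hG : ∀ v ∈ Ioc a c, HasDerivAt G (G' v) v)
    (hG' : ∀ v ∈ Ioc a c, (K * (v - a))⁻¹ ≤ G' v) :
    Tendsto G (𝓝[>] a) atBot := by
  have hmem : ∀ v ∈ Ico (-c) (-a), -v ∈ Ioc a c := fun v hv =>
    ⟨lt_neg_of_lt_neg hv.2, neg_le.1 hv.1⟩
  have hrefl : Tendsto (fun v => -G (-v)) (𝓝[<] (-a)) atTop := by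
    refine tendsto_nhdsLT_atTop_of_inv_le_deriv (G' := fun v => G' (-v)) hK (neg_lt_neg hac)
      (fun v hv => ?_) (fun v hv => ?_)
    · exact ((hG (-v) (hmem v hv)).comp v (hasDerivAt_neg v)).neg.congr_deriv (by ring)
    · simpa [sub_eq_neg_add, add_comm] using hG' (-v) (hmem v hv)
  have hneg : Tendsto (fun v : ℝ => -v) (𝓝[>] a) (𝓝[<] (-a)) := by
    refine tendsto_nhdsWithin_of_tendsto_nhds_of_eventually_within _ ?_ ?_
    · exact tendsto_nhdsWithin_of_tendsto_nhds (continuous_neg.tendsto a)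
    · filter_upwards [self_mem_nhdsWithin] with v hv using neg_lt_neg (mem_Ioi.1 hv)
  simpa [Function.comp_def] using tendsto_neg_atTop_atBot.comp (hrefl.comp hneg)

theorem exists_inverse_of_hasDerivAt_pos {G g : ℝ → ℝ} {a b : ℝ} (hab : a < b)
    (hG : ∀ v ∈ Ioo a b, HasDerivAt G (g v) v) (hg : ∀ v ∈ Ioo a b, 0 < g v)
    (hbot : Tendsto G (𝓝[>] a) atBot) (htop : Tendsto G (𝓝[<] b) atTop) :
    ∃ u : ℝ → ℝ, (∀ x, u x ∈ Ioo a b) ∧ (∀ v ∈ Ioo a b, u (G v) = v) ∧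
      (∀ x, HasDerivAt u (g (u x))⁻¹ x) ∧
      StrictMono u ∧ Tendsto u atBot (𝓝 a) ∧ Tendsto u atTop (𝓝 b) := by
  have hGcont : ContinuousOn G (Ioo a b) := fun v hv =>
    (hG v hv).continuousAt.continuousWithinAt
  have hGmono : StrictMonoOn G (Ioo a b) :=
    strictMonoOn_of_hasDerivWithinAt_pos (convex_Ioo a b) hGcont
      (fun v hv => (hG v (interior_subset hv)).hasDerivWithinAt)
      (fun v hv => hg v (interior_subset hv))
  have hsurj : Function.Surjective ((Ioo a b).domRestrict G) :=
    surjOn_iff_surjective.1 <| hGcont.surjOn_of_tendsto (nonempty_Ioo.2 hab)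
      ((tendsto_comp_coe_Ioo_atBot hab).2 hbot) ((tendsto_comp_coe_Ioo_atTop hab).2 htop)
  let e : Ioo a b ≃o ℝ :=
    StrictMono.orderIsoOfSurjective _ (fun x y hxy => hGmono x.2 y.2 hxy) hsurj
  have hcont : Continuous fun x => (e.symm x : ℝ) := continuous_subtype_val.comp e.symm.continuous
  refine ⟨fun x => e.symm x, fun x => (e.symm x).2,
    fun v hv => congrArg Subtype.val (e.symm_apply_apply ⟨v, hv⟩), fun x => ?_,
    (Subtype.strictMono_coe _).comp e.symm.strictMono,
    ((tendsto_Ioo_atBot).1 e.symm.tendsto_atBot).mono_right nhdsWithin_le_nhds,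
    ((tendsto_Ioo_atTop).1 e.symm.tendsto_atTop).mono_right nhdsWithin_le_nhds⟩
  exact HasDerivAt.of_local_left_inverse hcont.continuousAt (hG _ (e.symm x).2)
    (hg _ (e.symm x).2).ne' (Eventually.of_forall e.apply_symm_apply)

theorem exists_heteroclinic_orbit {F : ℝ → ℝ} {a b c K : ℝ} (hac : a < c) (hcb : c < b)
    (hFc : ContinuousOn F (Ioo a b)) (hF0 : ∀ v ∈ Ioo a b, 0 < F v)
    (hF : ∀ v ∈ Ioo a b, F v ≤ K * min (v - a) (b - v)) :
    ∃ u : ℝ → ℝ, u 0 = c ∧ (∀ x, u x ∈ Ioo a b) ∧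
      (∀ x, HasDerivAt u (F (u x)) x) ∧
      StrictMono u ∧ Tendsto u atBot (𝓝 a) ∧ Tendsto u atTop (𝓝 b) := by
  have hc : c ∈ Ioo a b := ⟨hac, hcb⟩
  have hK : 0 < K := by
    have := lt_min (sub_pos.2 hac) (sub_pos.2 hcb)
    nlinarith [hF0 c hc, hF c hc]
  have hFinv : ContinuousOn (fun v => (F v)⁻¹) (Ioo a b) := hFc.inv₀ fun v hv => (hF0 v hv).ne'
  have hinv_le : ∀ v ∈ Ioo a b, (K * min (v - a) (b - v))⁻¹ ≤ (F v)⁻¹ := fun v hv =>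
    inv_anti₀ (hF0 v hv) (hF v hv)
  set G : ℝ → ℝ := fun v => ∫ t in c..v, (F t)⁻¹
  have hG : ∀ v ∈ Ioo a b, HasDerivAt G (F v)⁻¹ v := fun v hv =>
    intervalIntegral.integral_hasDerivAt_right
      ((hFinv.mono (ordConnected_Ioo.uIcc_subset hc hv)).intervalIntegrable)
      (hFinv.stronglyMeasurableAtFilter isOpen_Ioo v hv)
      (hFinv.continuousAt (isOpen_Ioo.mem_nhds hv))
  have hbot : Tendsto G (𝓝[>] a) atBot := by
    have hsub : Ioc a c ⊆ Ioo a b := fun v hv => ⟨hv.1, hv.2.trans_lt hcb⟩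
    refine tendsto_nhdsGT_atBot_of_inv_le_deriv hK hac (fun v hv => hG v (hsub hv))
      (fun v hv => le_trans ?_ (hinv_le v (hsub hv)))
    gcongr
    exacts [mul_pos hK (lt_min (sub_pos.2 hv.1) (sub_pos.2 (hsub hv).2)), min_le_left _ _]
  have htop : Tendsto G (𝓝[<] b) atTop := by
    have hsub : Ico c b ⊆ Ioo a b := fun v hv => ⟨hac.trans_le hv.1, hv.2⟩
    refine tendsto_nhdsLT_atTop_of_inv_le_deriv hK hcb (fun v hv => hG v (hsub hv))
      (fun v hv => le_trans ?_ (hinv_le v (hsub hv)))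
    gcongr
    exacts [mul_pos hK (lt_min (sub_pos.2 (hsub hv).1) (sub_pos.2 hv.2)), min_le_right _ _]
  obtain ⟨u, hmem, hinv, hu, hmono, hua, hub⟩ := exists_inverse_of_hasDerivAt_pos
    (hac.trans hcb) hG (fun v hv => inv_pos.2 (hF0 v hv)) hbot htop
  refine ⟨u, ?_, hmem, fun x => by simpa using hu x, hmono, hua, hub⟩
  simpa [G] using hinv c hc

/-- The paper's `Φ` for `s² = (f a - f b) / (b - a)`: the height at `v` of the chord of `f` over
`[a, b]` above the graph of `f`. -/
noncomputable def chordGap (f : ℝ → ℝ) (a b v : ℝ) : ℝ :=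
  (f a - f b) / (b - a) * (b - v) + f b - f v

section chordGap

variable {S : Set ℝ} {f : ℝ → ℝ} {a b v f' : ℝ}

theorem StrictConvexOn.chordGap_pos (hf : StrictConvexOn ℝ S f) (ha : a ∈ S) (hb : b ∈ S)
    (hv : v ∈ Ioo a b) : 0 < chordGap f a b v := by
  have hab : 0 < b - a := sub_pos.2 (hv.1.trans hv.2)
  have hchord := hf.secant_strict_mono_aux1 ha hb hv.1 hv.2
  have : chordGap f a b v = ((b - v) * f a + (v - a) * f b - (b - a) * f v) / (b - a) := by
    unfold chordGap; field_simp; ring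
  rw [this]
  exact div_pos (by linarith) hab

theorem ConvexOn.chordGap_le_left (hf : ConvexOn ℝ S f) (ha : a ∈ S) (hb : b ∈ S)
    (hv : v ∈ Ioo a b) (hf' : HasDerivAt f f' a) :
    chordGap f a b v ≤ -(f' + (f a - f b) / (b - a)) * (v - a) := by
  have hab : b - a ≠ 0 := (sub_pos.2 (hv.1.trans hv.2)).ne'
  have htangent := hf.le_slope_of_hasDerivAt ha
    (hf.1.ordConnected.out ha hb (Ioo_subset_Icc_self hv)) hv.1 hf'
  rw [slope_def_field, le_div_iff₀ (sub_pos.2 hv.1)] at htangent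
  have hsplit : chordGap f a b v = f a - f v - (f a - f b) / (b - a) * (v - a) := by
    unfold chordGap; field_simp; ring
  rw [hsplit]
  linarith

theorem ConvexOn.chordGap_le_right (hf : ConvexOn ℝ S f) (ha : a ∈ S) (hb : b ∈ S)
    (hv : v ∈ Ioo a b) (hf' : HasDerivAt f f' b) :
    chordGap f a b v ≤ (f' + (f a - f b) / (b - a)) * (b - v) := by
  have htangent := hf.slope_le_of_hasDerivAt (hf.1.ordConnected.out ha hb (Ioo_subset_Icc_self hv))
    hb hv.2 hf'
  rw [slope_def_field, div_le_iff₀ (sub_pos.2 hv.2)] at htangent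
  unfold chordGap
  linarith

theorem ConvexOn.exists_chordGap_le_mul_min (hf : ConvexOn ℝ S f) (ha : a ∈ S) (hb : b ∈ S)
    (hfa : DifferentiableAt ℝ f a) (hfb : DifferentiableAt ℝ f b) :
    ∃ C, ∀ v ∈ Ioo a b, chordGap f a b v ≤ C * min (v - a) (b - v) := by
  refine ⟨max (-(deriv f a + (f a - f b) / (b - a))) (deriv f b + (f a - f b) / (b - a)),
    fun v hv => ?_⟩
  rcases min_choice (v - a) (b - v) with h | h <;> rw [h]
  · exact (hf.chordGap_le_left ha hb hv hfa.hasDerivAt).trans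
      (mul_le_mul_of_nonneg_right (le_max_left _ _) (sub_pos.2 hv.1).le)
  · exact (hf.chordGap_le_right ha hb hv hfb.hasDerivAt).trans
      (mul_le_mul_of_nonneg_right (le_max_right _ _) (sub_pos.2 hv.2).le)

theorem StrictConvexOn.exists_travelingWave (hf : StrictConvexOn ℝ S f)
    (hfd : ∀ v ∈ S, DifferentiableAt ℝ f v) (ha : a ∈ S) (hb : b ∈ S) {c κ : ℝ}
    (hac : a < c) (hcb : c < b) (ha0 : 0 < a) (hκ : 0 < κ) :
    ∃ u : ℝ → ℝ, u 0 = c ∧ (∀ x, u x ∈ Ioo a b) ∧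
      (∀ x, HasDerivAt u (u x / κ * chordGap f a b (u x)) x) ∧
      StrictMono u ∧ Tendsto u atBot (𝓝 a) ∧ Tendsto u atTop (𝓝 b) := by
  have hsub : Ioo a b ⊆ S := Ioo_subset_Icc_self.trans (hf.1.ordConnected.out ha hb)
  obtain ⟨C, hC⟩ := hf.convexOn.exists_chordGap_le_mul_min ha hb (hfd a ha) (hfd b hb)
  refine exists_heteroclinic_orbit (F := fun v => v / κ * chordGap f a b v) (K := b / κ * C)
    hac hcb (fun v hv => ?_) (fun v hv => ?_) (fun v hv => ?_)
  · have := (hfd v (hsub hv)).continuousAt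
    unfold chordGap
    exact ContinuousAt.continuousWithinAt (by fun_prop)
  · exact mul_pos (div_pos (ha0.trans hv.1) hκ) (hf.chordGap_pos ha hb hv)
  · calc v / κ * chordGap f a b v ≤ b / κ * chordGap f a b v := by
          gcongr
          exacts [(hf.chordGap_pos ha hb hv).le, hv.2.le]
      _ ≤ b / κ * (C * min (v - a) (b - v)) := by
          gcongr
          exacts [div_nonneg (ha0.trans (hv.1.trans hv.2)).le hκ.le, hC v hv]
      _ = b / κ * C * min (v - a) (b - v) := by ring

end chordGap

noncomputable def singularPressure (ε γ v : ℝ) : ℝ := ε * (v - 1) ^ (-γ)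

section singularPressure

variable {ε γ v : ℝ}

theorem hasDerivAt_singularPressure (hv : 1 < v) :
    HasDerivAt (singularPressure ε γ) (-(ε * γ) * (v - 1) ^ (-γ - 1)) v := by
  have := ((Real.hasDerivAt_rpow_const (p := -γ) (Or.inl (sub_pos.2 hv).ne')).comp v
    ((hasDerivAt_id v).sub_const 1)).const_mul ε
  exact this.congr_deriv (by ring)

theorem strictAntiOn_singularPressure (hε : 0 < ε) (hγ : 0 < γ) :
    StrictAntiOn (singularPressure ε γ) (Ioi 1) := fun _ hu _ _ huw =>
  mul_lt_mul_of_pos_left (Real.rpow_lt_rpow_of_neg (sub_pos.2 (mem_Ioi.1 hu))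
    (sub_lt_sub_right huw 1) (neg_lt_zero.2 hγ)) hε

theorem strictConvexOn_singularPressure (hε : 0 < ε) (hγ : 0 < γ) :
    StrictConvexOn ℝ (Ioi 1) (singularPressure ε γ) := by
  refine StrictMonoOn.strictConvexOn_of_deriv (convex_Ioi 1)
    (fun v hv => (hasDerivAt_singularPressure hv).continuousAt.continuousWithinAt) ?_
  rw [interior_Ioi]
  intro u hu w hw huw
  rw [(hasDerivAt_singularPressure hu).deriv, (hasDerivAt_singularPressure hw).deriv]
  have := Real.rpow_lt_rpow_of_neg (sub_pos.2 (mem_Ioi.1 hu)) (sub_lt_sub_right huw 1)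
    (by linarith : -γ - 1 < 0)
  nlinarith [mul_pos hε hγ]

end singularPressure

theorem stmt6_general (γ μ vp ε : ℝ) (hγ : 1 ≤ γ) (hμ : 0 < μ)
    (hε : 0 < ε) (hε1 : ε < 1) (hnorm : 1 + ε ^ (1 / (γ + 1)) < vp)
    (pe : ℝ → ℝ) (hpe : ∀ v : ℝ, pe v = ε * (v - 1) ^ (-γ))
    (vm : ℝ) (hvm : vm = 1 + ε ^ (1 / γ))
    (se : ℝ) (hse : se = Real.sqrt ((pe vm - pe vp) / (vp - vm)))
    (Φ : ℝ → ℝ) (hΦ : ∀ v : ℝ, Φ v = se ^ 2 * (vp - v) + pe vp - pe v) :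
    ∃ vb : ℝ → ℝ,
      vb 0 = 1 + ε ^ (1 / (γ + 1)) ∧
      (∀ x : ℝ, vm < vb x ∧ vb x < vp) ∧
      (∀ x : ℝ, HasDerivAt vb (vb x / (μ * se) * Φ (vb x)) x) ∧
      StrictMono vb ∧
      Tendsto vb atBot (nhds vm) ∧
      Tendsto vb atTop (nhds vp) := by
  have hγ0 : 0 < γ := by linarith
  have h1vm : 1 < vm := by rw [hvm]; linarith [Real.rpow_pos_of_pos hε (1 / γ)]
  have hvmc : vm < 1 + ε ^ (1 / (γ + 1)) := by
    rw [hvm]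
    linarith [Real.rpow_lt_rpow_of_exponent_gt hε hε1
      (one_div_lt_one_div_of_lt hγ0 (lt_add_one γ))]
  have hvmp : vm < vp := hvmc.trans hnorm
  obtain rfl : pe = singularPressure ε γ := funext hpe
  have hjump : 0 < (singularPressure ε γ vm - singularPressure ε γ vp) / (vp - vm) :=
    div_pos (sub_pos.2 (strictAntiOn_singularPressure hε hγ0 h1vm (h1vm.trans hvmp) hvmp))
      (sub_pos.2 hvmp)
  obtain rfl : Φ = chordGap (singularPressure ε γ) vm vp := by
    funext v
    rw [hΦ, chordGap, hse, Real.sq_sqrt hjump.le]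
  exact (strictConvexOn_singularPressure hε hγ0).exists_travelingWave
    (fun v hv => (hasDerivAt_singularPressure hv).differentiableAt) h1vm (h1vm.trans hvmp)
    hvmc hnorm (zero_lt_one.trans h1vm) (mul_pos hμ (hse ▸ Real.sqrt_pos.2 hjump))

/-- Existence of the soft-congestion traveling-wave profile `v̄_ε`: a strictly increasing
solution of `v̄_ε' = (v̄_ε/(μ s_ε)) Φ_ε(v̄_ε)` with values in `(v₋^ε, v₊)`, normalized by
`v̄_ε(0) = 1 + ε^{1/(γ+1)}`, connecting `v₋^ε` at `−∞` to `v₊` at `+∞`. -/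
theorem stmt6 (γ μ vp ε : ℝ) (hγ : 1 ≤ γ) (hμ : 0 < μ) (hvp : 1 < vp)
    (hε : 0 < ε) (hε1 : ε < 1) (hnorm : 1 + ε ^ (1 / (γ + 1)) < vp)
    (pe : ℝ → ℝ) (hpe : ∀ v : ℝ, pe v = ε * (v - 1) ^ (-γ))
    (vm : ℝ) (hvm : vm = 1 + ε ^ (1 / γ))
    (se : ℝ) (hse : se = Real.sqrt ((pe vm - pe vp) / (vp - vm)))
    (Φ : ℝ → ℝ) (hΦ : ∀ v : ℝ, Φ v = se ^ 2 * (vp - v) + pe vp - pe v) :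
    ∃ vb : ℝ → ℝ,
      vb 0 = 1 + ε ^ (1 / (γ + 1)) ∧
      (∀ x : ℝ, vm < vb x ∧ vb x < vp) ∧
      (∀ x : ℝ, HasDerivAt vb (vb x / (μ * se) * Φ (vb x)) x) ∧
      StrictMono vb ∧
      Tendsto vb atBot (nhds vm) ∧
      Tendsto vb atTop (nhds vp) :=
  stmt6_general γ μ vp ε hγ hμ hε hε1 hnorm pe hpe vm hvm se hse Φ hΦ
end

section
/- Let γ ≥ 1, μ > 0, v₊ > 1, 0 < ε with v₋^ε := 1 + ε^{1/γ} < v₊, and let v̄_ε : ℝ → (v₋^ε, v₊) be a differentiable function satisfying v̄_ε'(x) = (v̄_ε(x)/(μ s_ε)) Φ_ε(v̄_ε(x)) for all x, where p_ε, s_ε, Φ_ε are as in the soft-congestion setting. Then for all x ∈ ℝ: 0 < v̄_ε'(x) ≤ s_ε v₊ (v₊ − 1)/μ, and moreover s_ε² ≤ 1/(v₊ − 1 − ε^{1/γ}); in particular the profiles v̄_ε are uniformly Lipschitz as ε → 0. -/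
/-!
The pressure `p v = ε (v - 1)^(-γ)` is strictly decreasing and strictly convex on `(1, ∞)`, and
`p v₋ = 1`. Since `s²` is minus the slope of the chord of `p` from `v₋` to `v₊`, the quantity
`Φ v = s² (v₊ - v) + p v₊ - p v` is the height of that chord above the graph of `p`, hence positive
on `(v₋, v₊)`; monotonicity gives `Φ v ≤ s² (v₊ - v)`. Plugging both into the profile equation
bounds `v̄'`, and `p v₊ > 0` gives `s² = (1 - p v₊) / (v₊ - v₋) ≤ 1 / (v₊ - v₋)`.
-/

open Set

theorem deriv_softPressure (ε γ v : ℝ) :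
    deriv (fun v : ℝ => ε * (v - 1) ^ (-γ)) v = -(ε * γ) * (v - 1) ^ (-γ - 1) := by
  rw [deriv_const_mul_field, deriv_comp_sub_const (fun x : ℝ => x ^ (-γ)), Real.deriv_rpow_const]
  ring

theorem softPressure_strictConvexOn {ε γ : ℝ} (hε : 0 < ε) (hγ : 0 < γ) :
    StrictConvexOn ℝ (Ioi 1) fun v : ℝ => ε * (v - 1) ^ (-γ) := by
  refine StrictMonoOn.strictConvexOn_of_deriv (convex_Ioi 1) (fun v hv => ?_) ?_
  · exact ((continuousAt_id.sub continuousAt_const).rpow_const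
      (Or.inl (sub_ne_zero.2 (ne_of_gt hv)))).const_mul ε |>.continuousWithinAt
  · rw [interior_Ioi]
    intro u hu v hv huv
    simp only [deriv_softPressure]
    have : (v - 1) ^ (-γ - 1) < (u - 1) ^ (-γ - 1) :=
      Real.rpow_lt_rpow_of_neg (sub_pos.2 hu) (by linarith) (by linarith)
    nlinarith [mul_pos hε hγ]

theorem softPressure_strictAntiOn {ε γ : ℝ} (hε : 0 < ε) (hγ : 0 < γ) :
    StrictAntiOn (fun v : ℝ => ε * (v - 1) ^ (-γ)) (Ioi 1) := fun u hu v _ huv =>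
  mul_lt_mul_of_pos_left (Real.rpow_lt_rpow_of_neg (sub_pos.2 hu) (by linarith) (by linarith)) hε

theorem softPressure_one_add_rpow_one_div {ε γ : ℝ} (hε : 0 < ε) (hγ : γ ≠ 0) :
    ε * (1 + ε ^ (1 / γ) - 1) ^ (-γ) = 1 := by
  rw [add_sub_cancel_left, ← Real.rpow_mul hε.le, one_div_mul_eq_div, neg_div, div_self hγ,
    Real.rpow_neg_one, mul_inv_cancel₀ hε.ne']

theorem StrictConvexOn.lt_secant {s : Set ℝ} {f : ℝ → ℝ} (hf : StrictConvexOn ℝ s f) {a b x : ℝ}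
    (ha : a ∈ s) (hb : b ∈ s) (hax : a < x) (hxb : x < b) :
    f x < (f a - f b) / (b - a) * (b - x) + f b := by
  have hab : 0 < b - a := by linarith
  rw [div_mul_eq_mul_div, div_add' _ _ _ hab.ne', lt_div_iff₀ hab]
  linarith [hf.secant_strict_mono_aux1 ha hb hax hxb]

theorem travelingWave_slope_le {μ s v vp φ : ℝ} (hμ : 0 < μ) (hs : 0 < s) (hv : 1 < v)
    (hvp : v < vp) (hφ : φ ≤ s ^ 2 * (vp - v)) : v / (μ * s) * φ ≤ s * vp * (vp - 1) / μ :=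
  calc v / (μ * s) * φ ≤ v / (μ * s) * (s ^ 2 * (vp - v)) := by gcongr
    _ = s * (v * (vp - v)) / μ := by field_simp
    _ ≤ s * (vp * (vp - 1)) / μ := by gcongr; nlinarith
    _ = s * vp * (vp - 1) / μ := by ring

theorem stmt8_general (γ μ vp ε : ℝ) (hγ : 1 ≤ γ) (hμ : 0 < μ) (hε : 0 < ε)
    (pe : ℝ → ℝ) (hpe : ∀ v : ℝ, pe v = ε * (v - 1) ^ (-γ))
    (vm : ℝ) (hvm : vm = 1 + ε ^ (1 / γ)) (hlt : vm < vp)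
    (se : ℝ) (hse : se = Real.sqrt ((pe vm - pe vp) / (vp - vm)))
    (Φ : ℝ → ℝ) (hΦ : ∀ v : ℝ, Φ v = se ^ 2 * (vp - v) + pe vp - pe v)
    (vb : ℝ → ℝ)
    (hrange : ∀ x : ℝ, vb x ∈ Ioo vm vp)
    (hode : ∀ x : ℝ, HasDerivAt vb (vb x / (μ * se) * Φ (vb x)) x) :
    (∀ x : ℝ, 0 < deriv vb x ∧ deriv vb x ≤ se * vp * (vp - 1) / μ) ∧
    se ^ 2 ≤ 1 / (vp - 1 - ε ^ (1 / γ)) := by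
  have hγ₀ : 0 < γ := by linarith
  have hanti : StrictAntiOn pe (Ioi 1) := funext hpe ▸ softPressure_strictAntiOn hε hγ₀
  have hconv : StrictConvexOn ℝ (Ioi 1) pe := funext hpe ▸ softPressure_strictConvexOn hε hγ₀
  have hvm₁ : 1 < vm := by rw [hvm]; linarith [Real.rpow_pos_of_pos hε (1 / γ)]
  have hpvm : pe vm = 1 := by rw [hpe, hvm, softPressure_one_add_rpow_one_div hε hγ₀.ne']
  have hpvp : pe vp < pe vm := hanti hvm₁ (hvm₁.trans hlt) hlt
  have hse_sq : se ^ 2 = (pe vm - pe vp) / (vp - vm) := by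
    rw [hse, Real.sq_sqrt (div_pos (by linarith) (by linarith)).le]
  have hse_pos : 0 < se := by
    rw [hse]; exact Real.sqrt_pos.2 (div_pos (by linarith) (by linarith))
  refine ⟨fun x => ?_, ?_⟩
  · obtain ⟨hvm_lt, hlt_vp⟩ := hrange x
    have hΦ_pos : 0 < Φ (vb x) := by
      rw [hΦ, hse_sq]
      linarith [hconv.lt_secant hvm₁ (hvm₁.trans hlt) hvm_lt hlt_vp]
    have hΦ_le : Φ (vb x) ≤ se ^ 2 * (vp - vb x) := by
      rw [hΦ]
      linarith [hanti (hvm₁.trans hvm_lt) (hvm₁.trans hlt) hlt_vp]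
    rw [(hode x).deriv]
    exact ⟨by have := hvm₁.trans hvm_lt; positivity,
      travelingWave_slope_le hμ hse_pos (hvm₁.trans hvm_lt) hlt_vp hΦ_le⟩
  · have hpvp_pos : 0 < pe vp := by
      rw [hpe]; exact mul_pos hε (Real.rpow_pos_of_pos (by linarith) _)
    rw [hse_sq, hpvm, hvm, sub_add_eq_sub_sub]
    gcongr <;> linarith

/-- Uniform Lipschitz bounds on the soft-congestion profiles: `0 < v̄_ε' ≤ s_ε v₊ (v₊−1)/μ`
and `s_ε² ≤ 1/(v₊ − 1 − ε^{1/γ})`. -/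
theorem stmt8 (γ μ vp ε : ℝ) (hγ : 1 ≤ γ) (hμ : 0 < μ) (hvp : 1 < vp) (hε : 0 < ε)
    (pe : ℝ → ℝ) (hpe : ∀ v : ℝ, pe v = ε * (v - 1) ^ (-γ))
    (vm : ℝ) (hvm : vm = 1 + ε ^ (1 / γ)) (hlt : vm < vp)
    (se : ℝ) (hse : se = Real.sqrt ((pe vm - pe vp) / (vp - vm)))
    (Φ : ℝ → ℝ) (hΦ : ∀ v : ℝ, Φ v = se ^ 2 * (vp - v) + pe vp - pe v)
    (vb : ℝ → ℝ)
    (hrange : ∀ x : ℝ, vb x ∈ Ioo vm vp)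
    (hode : ∀ x : ℝ, HasDerivAt vb (vb x / (μ * se) * Φ (vb x)) x) :
    (∀ x : ℝ, 0 < deriv vb x ∧ deriv vb x ≤ se * vp * (vp - 1) / μ) ∧
    se ^ 2 ≤ 1 / (vp - 1 - ε ^ (1 / γ)) :=
  stmt8_general γ μ vp ε hγ hμ hε pe hpe vm hvm hlt se hse Φ hΦ vb hrange hode
end

section
/- Let T > 0, u₋ ∈ ℝ, μ > 0, let x̃ : [0,T] → ℝ be differentiable, w⁰ : ℝ → ℝ continuous, and let v_s, u_s : [0,T] × [0,∞) → ℝ be C¹ with v_s > 0. Assume: (i) ∂ₜv_s(t,x) − x̃'(t) ∂ₓv_s(t,x) − ∂ₓu_s(t,x) = 0 for all t ∈ [0,T], x ≥ 0; (ii) v_s(t,0) = 1 and u_s(t,0) = u₋ for all t; (iii) the effective velocity satisfies u_s(t,x) − μ ∂ₓv_s(t,x)/v_s(t,x) = w⁰(x + x̃(t)) for all t, x; and (iv) u₋ ≠ w⁰(x̃(t)) for all t. Then ∂ₓv_s(t,0) = (u₋ − w⁰(x̃(t)))/μ and the free boundary satisfies the ODE x̃'(t) = −∂ₓu_s(t,0)/∂ₓv_s(t,0)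 = −μ ∂ₓu_s(t,0)/(u₋ − w⁰(x̃(t))) for all t ∈ [0,T]. -/
open Set Filter

/-- The free-boundary ODE: from the shifted mass equation, the boundary values
`v_s(t,0) = 1`, `u_s(t,0) = u₋`, and the transported effective velocity
`u_s − μ ∂ₓv_s/v_s = w⁰(x + x̃(t))`, one deduces `∂ₓv_s(t,0) = (u₋ − w⁰(x̃(t)))/μ` and
`x̃'(t) = −∂ₓu_s(t,0)/∂ₓv_s(t,0) = −μ ∂ₓu_s(t,0)/(u₋ − w⁰(x̃(t)))`. -/
theorem stmt17 (T um μ : ℝ) (hT : 0 < T) (hμ : 0 < μ)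
    (xt xt' : ℝ → ℝ)
    (hxt : ∀ t ∈ Icc (0 : ℝ) T, HasDerivWithinAt xt (xt' t) (Icc 0 T) t)
    (w0 : ℝ → ℝ) (hw0 : Continuous w0)
    (vs us : ℝ → ℝ → ℝ)
    (hvspos : ∀ t ∈ Icc (0 : ℝ) T, ∀ x ∈ Ici (0 : ℝ), 0 < vs t x)
    (vt vx ux : ℝ → ℝ → ℝ)
    (hvt : ∀ t ∈ Icc (0 : ℝ) T, ∀ x ∈ Ici (0 : ℝ),
      HasDerivWithinAt (fun τ => vs τ x) (vt t x) (Icc 0 T) t)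
    (hvx : ∀ t ∈ Icc (0 : ℝ) T, ∀ x ∈ Ici (0 : ℝ),
      HasDerivWithinAt (fun y => vs t y) (vx t x) (Ici 0) x)
    (hux : ∀ t ∈ Icc (0 : ℝ) T, ∀ x ∈ Ici (0 : ℝ),
      HasDerivWithinAt (fun y => us t y) (ux t x) (Ici 0) x)
    -- (i) mass equation on the half-line
    (hmass : ∀ t ∈ Icc (0 : ℝ) T, ∀ x ∈ Ici (0 : ℝ), vt t x - xt' t * vx t x - ux t x = 0)
    -- (ii) boundary values
    (hbc_v : ∀ t ∈ Icc (0 : ℝ) T, vs t 0 = 1)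
    (hbc_u : ∀ t ∈ Icc (0 : ℝ) T, us t 0 = um)
    -- (iii) transported effective velocity
    (heff : ∀ t ∈ Icc (0 : ℝ) T, ∀ x ∈ Ici (0 : ℝ),
      us t x - μ * vx t x / vs t x = w0 (x + xt t))
    -- (iv) nondegeneracy
    (hne : ∀ t ∈ Icc (0 : ℝ) T, um ≠ w0 (xt t)) :
    ∀ t ∈ Icc (0 : ℝ) T,
      vx t 0 = (um - w0 (xt t)) / μ ∧
      xt' t = -ux t 0 / vx t 0 ∧
      xt' t = -μ * ux t 0 / (um - w0 (xt t)) := by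
  intro t ht
  have h0 : (0:ℝ) ∈ Ici (0:ℝ) := mem_Ici.mpr le_rfl
  -- vx at boundary
  have heff0 := heff t ht 0 h0
  rw [hbc_v t ht, hbc_u t ht, zero_add, div_one] at heff0
  have hvx0 : vx t 0 = (um - w0 (xt t)) / μ := by
    field_simp
    linarith
  have hne0 : um - w0 (xt t) ≠ 0 := sub_ne_zero.mpr (hne t ht)
  have hvxne : vx t 0 ≠ 0 := by
    rw [hvx0]
    exact div_ne_zero hne0 hμ.ne'
  -- vt at boundary is 0
  have h1 : HasDerivWithinAt (fun τ => vs τ 0) 0 (Icc 0 T) t :=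
    (hasDerivWithinAt_const t (Icc 0 T) (1:ℝ)).congr (fun τ hτ => hbc_v τ hτ) (hbc_v t ht)
  have hud := (uniqueDiffOn_Icc hT) t ht
  have hvt0 : vt t 0 = 0 := by
    have := (hvt t ht 0 h0).derivWithin hud
    rw [← this, h1.derivWithin hud]
  have hm := hmass t ht 0 h0
  rw [hvt0] at hm
  have hode : xt' t = -ux t 0 / vx t 0 := by
    field_simp
    linarith
  refine ⟨hvx0, hode, ?_⟩
  rw [hode, hvx0, div_div_eq_mul_div]
  ring
end

section
/- Let T > 0, u₋ ∈ ℝ, μ > 0, let x̃ : [0,T] → ℝ be differentiable, w⁰ : ℝ → ℝ of class C¹, and let v_s, u_s : [0,T] × [0,∞) → ℝ be sufficiently smooth with v_s > 0 up to the boundary. Assume: (i) v_s(t,0) = 1 and u_s(t,0) = u₋ for all t; (ii) v_s satisfies ∂ₜv_s − x̃'(t) ∂ₓv_s − μ ∂ₓ²(ln v_s) = ∂ₓ[w⁰(x + x̃(t))] up to the boundary x = 0; (iii) u₋ ≠ w⁰(x̃(t)) and x̃'(t) = −μ ∂ₓu_s(t,0)/(u₋ − w⁰(x̃(t))) with moreover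 ∂ₓv_s(t,0) = (u₋ − w⁰(x̃(t)))/μ for all t. Then the effective velocity w_s := u_s − μ ∂ₓ(ln v_s) satisfies the Robin boundary condition μ ∂ₓw_s(t,0) + x̃'(t) w_s(t,0) = x̃'(t) w⁰(x̃(t)) + μ ∂ₓw⁰(x̃(t)) for all t ∈ [0,T]. -/
open Set Filter

/-- Robin boundary condition for the effective velocity `w_s = u_s − μ ∂ₓ ln v_s` at the
free boundary: `μ ∂ₓw_s(t,0) + x̃'(t) w_s(t,0) = x̃'(t) w⁰(x̃(t)) + μ ∂ₓw⁰(x̃(t))`.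
Here `∂ₓ ln v_s = vx/v_s` and `∂ₓ² ln v_s = lxx` denotes the spatial derivative of
`vx/v_s`, so that `∂ₓw_s(t,0) = ux(t,0) − μ lxx(t,0)` and
`w_s(t,0) = u_s(t,0) − μ vx(t,0)/v_s(t,0)`. -/
theorem stmt19 (T um μ : ℝ) (hT : 0 < T) (hμ : 0 < μ)
    (xt xt' : ℝ → ℝ)
    (hxt : ∀ t ∈ Icc (0 : ℝ) T, HasDerivWithinAt xt (xt' t) (Icc 0 T) t)
    (w0 : ℝ → ℝ) (hw0 : ContDiff ℝ 1 w0)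
    (vs us : ℝ → ℝ → ℝ)
    (hvspos : ∀ t ∈ Icc (0 : ℝ) T, ∀ x ∈ Ici (0 : ℝ), 0 < vs t x)
    (vt vx ux lxx : ℝ → ℝ → ℝ)
    (hvt : ∀ t ∈ Icc (0 : ℝ) T, ∀ x ∈ Ici (0 : ℝ),
      HasDerivWithinAt (fun τ => vs τ x) (vt t x) (Icc 0 T) t)
    (hvx : ∀ t ∈ Icc (0 : ℝ) T, ∀ x ∈ Ici (0 : ℝ),
      HasDerivWithinAt (fun y => vs t y) (vx t x) (Ici 0) x)
    (hux : ∀ t ∈ Icc (0 : ℝ) T, ∀ x ∈ Ici (0 : ℝ),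
      HasDerivWithinAt (fun y => us t y) (ux t x) (Ici 0) x)
    -- `lxx = ∂ₓ(vx/v_s) = ∂ₓ² ln v_s`
    (hlxx : ∀ t ∈ Icc (0 : ℝ) T, ∀ x ∈ Ici (0 : ℝ),
      HasDerivWithinAt (fun y => vx t y / vs t y) (lxx t x) (Ici 0) x)
    -- (i) boundary values
    (hbc_v : ∀ t ∈ Icc (0 : ℝ) T, vs t 0 = 1)
    (hbc_u : ∀ t ∈ Icc (0 : ℝ) T, us t 0 = um)
    -- (ii) equation for v_s with explicit diffusion, up to the boundary
    (hveq : ∀ t ∈ Icc (0 : ℝ) T, ∀ x ∈ Ici (0 : ℝ),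
      vt t x - xt' t * vx t x - μ * lxx t x = deriv w0 (x + xt t))
    -- (iii) nondegeneracy, interface ODE, and boundary slope of v_s
    (hne : ∀ t ∈ Icc (0 : ℝ) T, um ≠ w0 (xt t))
    (hode : ∀ t ∈ Icc (0 : ℝ) T, xt' t = -μ * ux t 0 / (um - w0 (xt t)))
    (hvx0 : ∀ t ∈ Icc (0 : ℝ) T, vx t 0 = (um - w0 (xt t)) / μ) :
    ∀ t ∈ Icc (0 : ℝ) T,
      μ * (ux t 0 - μ * lxx t 0) + xt' t * (us t 0 - μ * vx t 0 / vs t 0)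
        = xt' t * w0 (xt t) + μ * deriv w0 (xt t) := by
  intro t ht
  -- time derivative of vs · 0 vanishes since vs τ 0 = 1
  have hconst : ∀ τ ∈ Icc (0 : ℝ) T, (fun τ => vs τ 0) τ = (fun _ => (1 : ℝ)) τ := by
    intro τ hτ; exact hbc_v τ hτ
  have hd0 : HasDerivWithinAt (fun τ => vs τ 0) 0 (Icc 0 T) t :=
    (hasDerivWithinAt_const t _ (1 : ℝ)).congr hconst (hbc_v t ht)
  have hud : UniqueDiffWithinAt ℝ (Icc (0 : ℝ) T) t := uniqueDiffOn_Icc hT t ht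
  have hvt0 : vt t 0 = 0 := by
    have := (hvt t ht 0 (self_mem_Ici)).derivWithin hud
    rw [hd0.derivWithin hud] at this
    exact this.symm
  have h1 := hveq t ht 0 self_mem_Ici
  rw [hvt0, zero_add] at h1
  have hne' : um - w0 (xt t) ≠ 0 := sub_ne_zero.mpr (hne t ht)
  have h2 : xt' t * (um - w0 (xt t)) = -μ * ux t 0 := by
    have := hode t ht
    field_simp at this
    linarith [this]
  rw [hbc_u t ht, hbc_v t ht, hvx0 t ht]
  have hμ' : μ ≠ 0 := ne_of_gt hμ
  rw [hvx0 t ht] at h1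
  field_simp at h1 ⊢
  nlinarith [h1, h2]
end
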